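/- arXiv:2202.07340 — 2 statements merged into one kernel-verified Lean document; each statement's English description precedes it below -/
import Mathlib

section
/- Let A ∈ ℝ^{n_1×⋯×n_m} be an entrywise strictly positive tensor and let r_k ∈ Δ^{n_k} for k = 1,…,m. Then there exists a tensor B ∈ B(r_1,…,r_m) such that ||A − B||_1 ≤ 2 Σ_{k=1}^m ||r_k − r_k(A)||_1. -/
open Finset

namespace MOT

/-- The index set of a tensor with mode sizes `n 0, …, n (m-1)`. -/
abbrev Idx {m : ℕ} (n : Fin m → ℕ) := ∀ k : Fin m, Fin (n k)

/-- A real tensor of order `m` with mode sizes `n k`. -/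
abbrev Tensor {m : ℕ} (n : Fin m → ℕ) := Idx n → ℝ

/-- The `k`-th marginal of a tensor: `(r_k(X))_j = ∑_{I : i_k = j} X_I`. -/
noncomputable def marginal {m : ℕ} {n : Fin m → ℕ} (X : Tensor n) (k : Fin m)
    (j : Fin (n k)) : ℝ :=
  ∑ I : Idx n, if I k = j then X I else 0

/-- The entrywise ℓ¹-norm of a tensor. -/
noncomputable def tnorm1 {m : ℕ} {n : Fin m → ℕ} (X : Tensor n) : ℝ :=
  ∑ I : Idx n, |X I|

/-- The uniform norm (maximum absolute entry) of a real-valued family. -/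
noncomputable def supAbs {ι : Type*} (X : ι → ℝ) : ℝ := ⨆ i, |X i|

/-- The ℓ¹-norm of a vector. -/
noncomputable def vnorm1 {N : ℕ} (v : Fin N → ℝ) : ℝ := ∑ j, |v j|

/-- The Euclidean norm of a vector. -/
noncomputable def vnorm2 {N : ℕ} (v : Fin N → ℝ) : ℝ := Real.sqrt (∑ j, v j ^ 2)

/-- The Euclidean inner product of two vectors. -/
noncomputable def vinner {N : ℕ} (v w : Fin N → ℝ) : ℝ := ∑ j, v j * w j

/-- `v ∈ Δ^N`: entrywise strictly positive with entries summing to 1. -/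
def IsSimplex {N : ℕ} (v : Fin N → ℝ) : Prop := (∀ j, 0 < v j) ∧ ∑ j, v j = 1

/-- `P ∈ B(r_1,…,r_m)`: entrywise nonnegative with prescribed marginals. -/
def Feasible {m : ℕ} {n : Fin m → ℕ} (r : ∀ k : Fin m, Fin (n k) → ℝ)
    (P : Tensor n) : Prop :=
  (∀ I, 0 ≤ P I) ∧ ∀ k j, marginal P k j = r k j

/-- The entropy `H(P) = -∑_I P_I log P_I` (with `0 · log 0 = 0`). -/
noncomputable def entropy {m : ℕ} {n : Fin m → ℕ} (P : Tensor n) : ℝ :=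
  -∑ I : Idx n, P I * Real.log (P I)

/-- The inner product `⟨X, Y⟩ = ∑_I X_I Y_I` of two tensors. -/
noncomputable def tinner {m : ℕ} {n : Fin m → ℕ} (X Y : Tensor n) : ℝ :=
  ∑ I : Idx n, X I * Y I

/-- The entropic transport cost `V_C^η(P) = ⟨C, P⟩ − η H(P)`. -/
noncomputable def entCost {m : ℕ} {n : Fin m → ℕ} (C : Tensor n) (η : ℝ)
    (P : Tensor n) : ℝ :=
  tinner C P - η * entropy P

/-- `P` is a positive diagonal scaling of `K`. -/
def IsScaling {m : ℕ} {n : Fin m → ℕ} (K P : Tensor n) : Prop :=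
  ∃ β : ∀ k : Fin m, Fin (n k) → ℝ, ∀ I, P I = K I * ∏ k, Real.exp (β k (I k))

end MOT

/-!
Clip `A` slice by slice: multiply the slice `i_k = j` by `min 1 (r_k(j) / r_k(A)(j))`. The
marginals of the clipped tensor `X` are then at most `r_k`, and since `1 - ∏ f ≤ ∑ (1 - f)` for
factors in `[0, 1]`, clipping removes mass at most `∑_k ‖(r_k(A) - r_k)⁺‖₁`. The deficits
`e_k = r_k - r_k(X) ≥ 0` all have the same total `s = 1 - ‖X‖₁`, so the outer product
`e_1 ⊗ ⋯ ⊗ e_m / s^(m-1)` has marginals exactly `e_k`; adding it to `X` gives `B`. Then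
`‖A - B‖₁ ≤ (‖A‖₁ - ‖X‖₁) + s = 2 (‖A‖₁ - ‖X‖₁) + (1 - ‖A‖₁)`, and `1 - ‖A‖₁` is at most
`‖(r_k - r_k(A))⁺‖₁` for any single `k`.
-/

namespace MOT

theorem one_sub_prod_le_sum_one_sub {ι : Type*} (s : Finset ι) {f : ι → ℝ}
    (h0 : ∀ i ∈ s, 0 ≤ f i) (h1 : ∀ i ∈ s, f i ≤ 1) :
    1 - ∏ i ∈ s, f i ≤ ∑ i ∈ s, (1 - f i) := by
  induction s using Finset.cons_induction with
  | empty => simp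
  | cons a s ha ih =>
    rw [Finset.prod_cons, Finset.sum_cons]
    have hP0 : 0 ≤ ∏ i ∈ s, f i := Finset.prod_nonneg fun i hi => h0 i (by simp [hi])
    have hP1 : ∏ i ∈ s, f i ≤ 1 := Finset.prod_le_one (fun i hi => h0 i (by simp [hi]))
      fun i hi => h1 i (by simp [hi])
    have hih := ih (fun i hi => h0 i (by simp [hi])) fun i hi => h1 i (by simp [hi])
    nlinarith [h0 a (by simp), h1 a (by simp)]

theorem two_mul_posPart_add_posPart_le (x y : ℝ) : 2 * (x - y)⁺ + (y - x)⁺ ≤ 2 * |y - x| := by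
  rw [← posPart_add_negPart (y - x), ← neg_sub y x, posPart_neg]
  linarith [posPart_nonneg (y - x)]

section Tensor

variable {m : ℕ} {n : Fin m → ℕ}

theorem sum_marginal (X : Tensor n) (k : Fin m) : ∑ j, marginal X k j = ∑ I, X I := by
  unfold marginal
  rw [Finset.sum_comm]
  simp

theorem marginal_nonneg {X : Tensor n} (hX : ∀ I, 0 ≤ X I) (k : Fin m) (j : Fin (n k)) :
    0 ≤ marginal X k j :=
  Finset.sum_nonneg fun I _ => by split_ifs <;> simp [hX I]

theorem marginal_add (X Y : Tensor n) (k : Fin m) (j : Fin (n k)) :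
    marginal (fun I => X I + Y I) k j = marginal X k j + marginal Y k j := by
  simp only [marginal, ← Finset.sum_add_distrib]
  exact Finset.sum_congr rfl fun I _ => by split_ifs <;> simp

theorem marginal_mono {X Y : Tensor n} (h : ∀ I, X I ≤ Y I) (k : Fin m) (j : Fin (n k)) :
    marginal X k j ≤ marginal Y k j :=
  Finset.sum_le_sum fun I _ => by split_ifs <;> simp [h I]

theorem marginal_mul_apply (X : Tensor n) (k : Fin m) (g : Fin (n k) → ℝ) (j : Fin (n k)) :
    marginal (fun I => X I * g (I k)) k j = marginal X k j * g j := by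
  simp only [marginal, Finset.sum_mul, ite_mul, zero_mul]
  exact Finset.sum_congr rfl fun I _ => by split_ifs with h <;> simp [h]

theorem marginal_div_const (X : Tensor n) (c : ℝ) (k : Fin m) (j : Fin (n k)) :
    marginal (fun I => X I / c) k j = marginal X k j / c := by
  simp only [marginal, Finset.sum_div, ite_div, zero_div]

def outer (v : ∀ k : Fin m, Fin (n k) → ℝ) : Tensor n := fun I => ∏ k, v k (I k)

theorem marginal_outer (v : ∀ k : Fin m, Fin (n k) → ℝ) (k : Fin m) (j : Fin (n k)) :
    marginal (outer v) k j = v k j * ∏ l : {l // l ≠ k}, ∑ i, v l i := by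
  classical
  rw [marginal, Fintype.sum_equiv (Equiv.piSplitAt k (fun l => Fin (n l))) _
      (fun p => if p.1 = j then v k p.1 * ∏ l : {l // l ≠ k}, v l (p.2 l) else 0)
      (fun I => by simp [outer, Fintype.prod_eq_mul_prod_subtype_ne _ k]),
    Fintype.sum_prod_type, Finset.sum_eq_single j (fun i _ hi => by simp [hi]) (by simp),
    Fintype.prod_sum, Finset.mul_sum]
  simp

theorem marginal_outer_div_pow {v : ∀ k : Fin m, Fin (n k) → ℝ} (hv : ∀ k j, 0 ≤ v k j)
    {s : ℝ} (hs : ∀ k, ∑ j, v k j = s) (k : Fin m) (j : Fin (n k)) :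
    marginal (fun I => outer v I / s ^ (m - 1)) k j = v k j := by
  rw [marginal_div_const, marginal_outer]
  simp only [hs, Finset.prod_const, Finset.card_univ, Fintype.card_subtype_compl,
    Fintype.card_fin, Fintype.card_unique]
  rcases eq_or_ne s 0 with rfl | hs0
  · have : v k j = 0 := (Finset.sum_eq_zero_iff_of_nonneg fun i _ => hv k i).1 (hs k) j
      (Finset.mem_univ j)
    simp [this]
  · exact mul_div_cancel_right₀ _ (pow_ne_zero _ hs0)

theorem exists_feasible_add_of_marginal_le (hm : 0 < m) {X : Tensor n} (hX : ∀ I, 0 ≤ X I)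
    {r : ∀ k : Fin m, Fin (n k) → ℝ} (hXr : ∀ k j, marginal X k j ≤ r k j)
    (hr : ∀ k, ∑ j, r k j = 1) :
    ∃ Y : Tensor n, (∀ I, 0 ≤ Y I) ∧ ∑ I, Y I = 1 - ∑ I, X I ∧
      Feasible r (fun I => X I + Y I) := by
  set e : ∀ k : Fin m, Fin (n k) → ℝ := fun k j => r k j - marginal X k j
  set s := 1 - ∑ I, X I
  have he0 : ∀ k j, 0 ≤ e k j := fun k j => sub_nonneg.2 (hXr k j)
  have he : ∀ k, ∑ j, e k j = s := fun k => by
    simp only [e, s, Finset.sum_sub_distrib, hr, sum_marginal]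
  let k₀ : Fin m := ⟨0, hm⟩
  have hs : 0 ≤ s := he k₀ ▸ Finset.sum_nonneg fun j _ => he0 k₀ j
  set Y : Tensor n := fun I => outer e I / s ^ (m - 1)
  have hY0 : ∀ I, 0 ≤ Y I := fun I =>
    div_nonneg (Finset.prod_nonneg fun k _ => he0 k (I k)) (pow_nonneg hs _)
  have hYe : ∀ k j, marginal Y k j = e k j := marginal_outer_div_pow he0 he
  refine ⟨Y, hY0, ?_, fun I => add_nonneg (hX I) (hY0 I), fun k j => ?_⟩
  · rw [← sum_marginal Y k₀, Finset.sum_congr rfl fun j _ => hYe k₀ j, he]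
  · rw [marginal_add, hYe]
    ring

variable (A : Tensor n) (r : ∀ k : Fin m, Fin (n k) → ℝ)

noncomputable def clipFactor (k : Fin m) (j : Fin (n k)) : ℝ := min 1 (r k j / marginal A k j)

noncomputable def clip : Tensor n := fun I => A I * ∏ k, clipFactor A r k (I k)

variable {A r}

theorem clipFactor_nonneg (hA : ∀ I, 0 ≤ A I) (hr : ∀ k j, 0 ≤ r k j) (k : Fin m)
    (j : Fin (n k)) : 0 ≤ clipFactor A r k j :=
  le_min zero_le_one (div_nonneg (hr k j) (marginal_nonneg hA k j))

theorem marginal_mul_clipFactor (hA : ∀ I, 0 ≤ A I) (hr : ∀ k j, 0 ≤ r k j) (k : Fin m)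
    (j : Fin (n k)) : marginal A k j * clipFactor A r k j = min (marginal A k j) (r k j) := by
  rcases (marginal_nonneg hA k j).eq_or_lt with h | h
  · simp [← h, hr k j]
  · rw [clipFactor, mul_min_of_nonneg _ _ h.le, mul_one, mul_div_cancel₀ _ h.ne']

theorem clip_nonneg (hA : ∀ I, 0 ≤ A I) (hr : ∀ k j, 0 ≤ r k j) (I : Idx n) : 0 ≤ clip A r I :=
  mul_nonneg (hA I) (Finset.prod_nonneg fun k _ => clipFactor_nonneg hA hr k (I k))

theorem clip_le_mul_clipFactor (hA : ∀ I, 0 ≤ A I) (hr : ∀ k j, 0 ≤ r k j) (k : Fin m)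
    (I : Idx n) : clip A r I ≤ A I * clipFactor A r k (I k) := by
  refine mul_le_mul_of_nonneg_left ?_ (hA I)
  rw [← Finset.mul_prod_erase _ _ (Finset.mem_univ k)]
  exact mul_le_of_le_one_right (clipFactor_nonneg hA hr k (I k)) (Finset.prod_le_one
    (fun l _ => clipFactor_nonneg hA hr l (I l)) fun l _ => min_le_left _ _)

theorem clip_le (hA : ∀ I, 0 ≤ A I) (hr : ∀ k j, 0 ≤ r k j) (I : Idx n) : clip A r I ≤ A I :=
  mul_le_of_le_one_right (hA I) (Finset.prod_le_one
    (fun l _ => clipFactor_nonneg hA hr l (I l)) fun _ _ => min_le_left _ _)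

theorem marginal_clip_le (hA : ∀ I, 0 ≤ A I) (hr : ∀ k j, 0 ≤ r k j) (k : Fin m)
    (j : Fin (n k)) : marginal (clip A r) k j ≤ r k j :=
  calc marginal (clip A r) k j
      ≤ marginal (fun I => A I * clipFactor A r k (I k)) k j :=
        marginal_mono (clip_le_mul_clipFactor hA hr k) k j
    _ = min (marginal A k j) (r k j) := by
        rw [marginal_mul_apply, marginal_mul_clipFactor hA hr]
    _ ≤ r k j := min_le_right _ _

theorem sum_sub_sum_clip_le (hA : ∀ I, 0 ≤ A I) (hr : ∀ k j, 0 ≤ r k j) :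
    ∑ I, A I - ∑ I, clip A r I ≤ ∑ k, ∑ j, (marginal A k j - r k j)⁺ :=
  calc ∑ I, A I - ∑ I, clip A r I
      = ∑ I, A I * (1 - ∏ k, clipFactor A r k (I k)) := by
        simp only [clip, ← Finset.sum_sub_distrib, mul_sub, mul_one]
    _ ≤ ∑ I, A I * ∑ k, (1 - clipFactor A r k (I k)) :=
        Finset.sum_le_sum fun I _ => mul_le_mul_of_nonneg_left
          (one_sub_prod_le_sum_one_sub _ (fun k _ => clipFactor_nonneg hA hr k (I k))
            fun k _ => min_le_left _ _) (hA I)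
    _ = ∑ k, ∑ j, marginal A k j * (1 - clipFactor A r k j) := by
        simp only [Finset.mul_sum]
        rw [Finset.sum_comm]
        refine Finset.sum_congr rfl fun k _ => ?_
        rw [← sum_marginal _ k, Finset.sum_congr rfl fun j _ =>
          marginal_mul_apply A k (fun i => 1 - clipFactor A r k i) j]
    _ = ∑ k, ∑ j, (marginal A k j - r k j)⁺ := by
        refine Finset.sum_congr rfl fun k _ => Finset.sum_congr rfl fun j _ => ?_
        rw [mul_one_sub, marginal_mul_clipFactor hA hr, posPart_def]
        rcases le_total (marginal A k j) (r k j) with h | h <;> simp [h]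

theorem tnorm1_sub_add_le {X Y A : Tensor n} (hXA : ∀ I, X I ≤ A I)
    (hY : ∀ I, 0 ≤ Y I) :
    tnorm1 (fun I => A I - (X I + Y I)) ≤ (∑ I, A I - ∑ I, X I) + ∑ I, Y I := by
  rw [tnorm1, ← Finset.sum_sub_distrib, ← Finset.sum_add_distrib]
  exact Finset.sum_le_sum fun I _ => abs_le.2 ⟨by linarith [hXA I], by linarith [hY I]⟩

theorem one_sub_sum_le_sum_posPart (A : Tensor n) {r : ∀ k : Fin m, Fin (n k) → ℝ}
    (k : Fin m) (hr : ∑ j, r k j = 1) :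
    1 - ∑ I, A I ≤ ∑ l, ∑ j, (r l j - marginal A l j)⁺ :=
  calc 1 - ∑ I, A I = ∑ j, (r k j - marginal A k j) := by
        rw [Finset.sum_sub_distrib, hr, sum_marginal]
    _ ≤ ∑ j, (r k j - marginal A k j)⁺ := Finset.sum_le_sum fun j _ => le_posPart _
    _ ≤ ∑ l, ∑ j, (r l j - marginal A l j)⁺ :=
        Finset.single_le_sum (f := fun l => ∑ j, (r l j - marginal A l j)⁺)
          (fun l _ => Finset.sum_nonneg fun j _ => posPart_nonneg _) (Finset.mem_univ k)

end Tensor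

/-- rounding, Lemma `lem:roundingproperties`: for every entrywise strictly
positive tensor `A` and marginals `r_k ∈ Δ^{n_k}` there is `B ∈ B(r_1,…,r_m)` with
`‖A − B‖₁ ≤ 2 ∑_k ‖r_k − r_k(A)‖₁`. -/
theorem rounding_exists
    {m : ℕ} (hm : 2 ≤ m) {n : Fin m → ℕ}
    (A : Tensor n) (hA : ∀ I, 0 < A I)
    (r : ∀ k : Fin m, Fin (n k) → ℝ) (hr : ∀ k, IsSimplex (r k)) :
    ∃ B : Tensor n, Feasible r B ∧
      tnorm1 (fun I => A I - B I) ≤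
        2 * ∑ k, vnorm1 (fun j => r k j - marginal A k j) := by
  have hA0 : ∀ I, 0 ≤ A I := fun I => (hA I).le
  have hr0 : ∀ k j, 0 ≤ r k j := fun k j => ((hr k).1 j).le
  obtain ⟨Y, hY0, hYsum, hB⟩ := exists_feasible_add_of_marginal_le (by omega)
    (clip_nonneg hA0 hr0) (marginal_clip_le hA0 hr0) fun k => (hr k).2
  refine ⟨_, hB, ?_⟩
  calc tnorm1 (fun I => A I - (clip A r I + Y I))
      ≤ (∑ I, A I - ∑ I, clip A r I) + ∑ I, Y I :=
        tnorm1_sub_add_le (fun I => clip_le hA0 hr0 I) hY0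
    _ = 2 * (∑ I, A I - ∑ I, clip A r I) + (1 - ∑ I, A I) := by rw [hYsum]; ring
    _ ≤ 2 * ∑ k, ∑ j, (marginal A k j - r k j)⁺ + ∑ k, ∑ j, (r k j - marginal A k j)⁺ := by
        gcongr
        · exact sum_sub_sum_clip_le hA0 hr0
        · exact one_sub_sum_le_sum_posPart A ⟨0, by omega⟩ (hr _).2
    _ ≤ 2 * ∑ k, vnorm1 (fun j => r k j - marginal A k j) := by
        simp only [vnorm1, Finset.mul_sum, ← Finset.sum_add_distrib]
        gcongr with k _ j _
        exact two_mul_posPart_add_posPart_le _ _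

end MOT
end

section
/- Let m ≥ 2, n_k ≥ 2 for all k, η > 0, and r_k ∈ Δ^{n_k} for k = 1,…,m. Let C, C̃ ∈ ℝ^{n_1×⋯×n_m} with C entrywise nonnegative and ||C − C̃||_∞ ≤ η ε_log for some 0 < ε_log ≤ 1. Let P be a minimizer of V_C^η over B(r_1,…,r_m) and let P̃ be a minimizer of V_{C̃}^η over B(r_1,…,r_m). Then ||P − P̃||_1 ≤ ε_log and |V_C^η(P) − V_C^η(P̃)| ≤ ε_log ||C||_∞ + η · ( ε_log · log(2/ε_log) + (ε_log/2) · log((Π_{k=1}^m n_k) − 1) ). -/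
open Finset

/-!
The entropic cost `V_C^η` is `η`-strongly convex on `B(r_1,…,r_m)` with respect to `‖·‖₁`,
because the Shannon entropy is `1`-strongly concave there (Pinsker's inequality). Comparing each
minimizer with the other one gives `η ‖P − P̃‖₁² ≤ ⟨C − C̃, P̃ − P⟩ ≤ η ε_log ‖P − P̃‖₁`.
For the cost gap, `V_C^η(P̃) − V_C^η(P) = ⟨C, P̃ − P⟩ + η (H(P) − H(P̃))`: the first term is at
most `ε_log ‖C‖_∞` by Hölder, and the entropy difference is bounded by the continuity estimate
`H(p) − H(q) ≤ T log(N − 1) + h(T)`, `T = ‖p − q‖₁ / 2`, followed by `h(ε/2) ≤ ε log(2/ε)`.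
-/

open Real InformationTheory

namespace MOT

/-- The rational function here is `3/2 (x - 4) + 27 / (2 (x + 2)) = 3 (x - 1)² / (2 (x + 2))`, the
pointwise lower bound for `klFun` behind Pinsker's inequality. -/
lemma isMinOn_klFun_sub_rational :
    IsMinOn (fun x ↦ klFun x - 3 / 2 * (x - 4) - 27 / 2 * (x + 2)⁻¹) (Set.Ioi 0) 1 := by
  set g : ℝ → ℝ := fun x ↦ klFun x - 3 / 2 * (x - 4) - 27 / 2 * (x + 2)⁻¹
  set g' : ℝ → ℝ := fun x ↦ log x - 3 / 2 + 27 / 2 * ((x + 2) ^ 2)⁻¹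
  have hg : ∀ x ∈ Set.Ioi (0 : ℝ), HasDerivAt g (g' x) x := by
    intro x hx
    have hx2 : x + 2 ≠ 0 := by linarith [hx.out]
    refine (((hasDerivAt_klFun (ne_of_gt hx)).sub
      (((hasDerivAt_id x).sub_const 4).const_mul (3 / 2))).sub
      ((((hasDerivAt_id x).add_const 2).inv hx2).const_mul (27 / 2))).congr_deriv ?_
    simp only [g', id]
    ring
  have hg' : ∀ x ∈ Set.Ioi (0 : ℝ), HasDerivAt g' (x⁻¹ - 27 * ((x + 2) ^ 3)⁻¹) x := by
    intro x hx
    have hx2 : x + 2 ≠ 0 := by linarith [hx.out]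
    refine (((hasDerivAt_log (ne_of_gt hx)).sub_const (3 / 2)).add
      (((((hasDerivAt_id x).add_const 2).pow 2).inv (pow_ne_zero 2 hx2)).const_mul
        (27 / 2))).congr_deriv ?_
    simp only [Pi.pow_apply, id]
    field_simp
    ring
  have hconvex : ConvexOn ℝ (Set.Ioi 0) g := by
    refine convexOn_of_hasDerivWithinAt2_nonneg (convex_Ioi 0)
      (f' := g') (f'' := fun x ↦ x⁻¹ - 27 * ((x + 2) ^ 3)⁻¹)
      (fun x hx ↦ (hg x hx).continuousAt.continuousWithinAt) ?_ ?_ ?_ <;>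
      simp only [interior_Ioi]
    · exact fun x hx ↦ (hg x hx).hasDerivWithinAt
    · exact fun x hx ↦ (hg' x hx).hasDerivWithinAt
    · intro x (hx : 0 < x)
      rw [sub_nonneg, ← div_eq_mul_inv, ← one_div, div_le_div_iff₀ (by positivity) hx]
      -- `(x + 2)³ - 27 x = (x - 1)² (x + 8)`
      nlinarith [mul_nonneg (sq_nonneg (x - 1)) (by linarith : (0 : ℝ) ≤ x + 8)]
  refine hconvex.isMinOn_of_rightDeriv_eq_zero (by simp) ?_
  rw [((hg 1 (by simp)).hasDerivWithinAt).derivWithin (uniqueDiffWithinAt_Ioi 1)]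
  norm_num [g']

lemma three_mul_sq_div_le_klFun {u : ℝ} (hu : 0 ≤ u) :
    3 * (u - 1) ^ 2 / (2 * (u + 2)) ≤ klFun u := by
  rcases hu.eq_or_lt with rfl | hu
  · norm_num [klFun_zero]
  have h := isMinOn_klFun_sub_rational (Set.mem_Ioi.2 hu)
  norm_num [klFun_one] at h
  have : u + 2 ≠ 0 := by positivity
  calc 3 * (u - 1) ^ 2 / (2 * (u + 2)) = 3 / 2 * (u - 4) + 27 / 2 * (u + 2)⁻¹ := by
        field_simp; ring
    _ ≤ klFun u := by linarith

lemma sub_add_three_halves_mul_sq_div_le {a b : ℝ} (ha : 0 ≤ a) (hb : 0 ≤ b)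
    (hab : b = 0 → a = 0) :
    a - b + 3 / 2 * ((a - b) ^ 2 / (a + 2 * b)) ≤ a * log a - a * log b := by
  rcases hb.eq_or_lt with rfl | hb
  · simp [hab rfl]
  have h := mul_le_mul_of_nonneg_left (three_mul_sq_div_le_klFun (div_nonneg ha hb.le)) hb.le
  have hlog : a * log (a / b) = a * log a - a * log b := by
    rcases eq_or_ne a 0 with rfl | ha'
    · simp
    · rw [log_div ha' hb.ne']; ring
  have : a / b + 2 ≠ 0 := by positivity
  calc a - b + 3 / 2 * ((a - b) ^ 2 / (a + 2 * b))
      = a - b + b * (3 * (a / b - 1) ^ 2 / (2 * (a / b + 2))) := by field_simp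
    _ ≤ a - b + b * klFun (a / b) := by linarith
    _ = a * log a - a * log b := by
        rw [klFun_apply, ← hlog]; field_simp; ring

lemma mul_log_add_sub_le {a c l : ℝ} (ha : 0 ≤ a) (hc : 0 ≤ c) (hac : c = 0 → a = 0)
    (hl : 0 < l) : a * log l + a - c * l ≤ a * log a - a * log c := by
  rcases ha.eq_or_lt with rfl | ha
  · simpa using mul_nonneg hc hl.le
  have hc : 0 < c := hc.lt_of_ne fun h ↦ ha.ne' (hac h.symm)
  have h := log_le_sub_one_of_pos (by positivity : 0 < c * l / a)
  rw [log_div (by positivity) ha.ne', log_mul hc.ne' hl.ne'] at h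
  have h := mul_le_mul_of_nonneg_left h ha.le
  have e : a * (c * l / a - 1) = c * l - a := by field_simp
  linarith

lemma sum_mul_log_div_le {ι : Type*} (s : Finset ι) {a c : ι → ℝ} (ha : ∀ i ∈ s, 0 ≤ a i)
    (hc : ∀ i ∈ s, 0 ≤ c i) (hac : ∀ i ∈ s, c i = 0 → a i = 0) :
    (∑ i ∈ s, a i) * log ((∑ i ∈ s, a i) / ∑ i ∈ s, c i) ≤
      ∑ i ∈ s, (a i * log (a i) - a i * log (c i)) := by
  set A := ∑ i ∈ s, a i
  set C := ∑ i ∈ s, c i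
  rcases (Finset.sum_nonneg ha).eq_or_lt with hA | hA
  · have ha0 := (Finset.sum_eq_zero_iff_of_nonneg ha).1 hA.symm
    rw [show A = 0 from hA.symm, zero_mul]
    exact (Finset.sum_eq_zero fun i hi ↦ by simp [ha0 i hi]).ge
  obtain ⟨i, hi, hai⟩ := Finset.exists_lt_of_sum_lt (by simpa using hA : ∑ i ∈ s, (0:ℝ) < A)
  have hC : 0 < C := ((hc i hi).lt_of_ne fun h ↦ hai.ne' (hac i hi h.symm)).trans_le
    (Finset.single_le_sum hc hi)
  calc A * log (A / C) = ∑ i ∈ s, (a i * log (A / C) + a i - c i * (A / C)) := by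
        simp only [Finset.sum_sub_distrib, Finset.sum_add_distrib, ← Finset.sum_mul]
        field_simp
        ring
    _ ≤ _ := Finset.sum_le_sum fun i hi ↦
        mul_log_add_sub_le (ha i hi) (hc i hi) (hac i hi) (by positivity)

lemma pinsker {ι : Type*} [Fintype ι] {p q : ι → ℝ} (hp : ∀ i, 0 ≤ p i) (hq : ∀ i, 0 ≤ q i)
    (hp1 : ∑ i, p i = 1) (hq1 : ∑ i, q i = 1) (hpq : ∀ i, q i = 0 → p i = 0) :
    (∑ i, |p i - q i|) ^ 2 / 2 ≤ ∑ i, (p i * log (p i) - p i * log (q i)) := by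
  classical
  have hw : ∀ i, 0 ≤ p i + 2 * q i := fun i ↦ by linarith [hp i, hq i]
  have hzero : ∀ i, p i + 2 * q i = 0 → p i = q i := fun i h ↦ by linarith [hp i, hq i]
  set s := Finset.univ.filter fun i ↦ 0 < p i + 2 * q i
  have hd : ∑ i ∈ s, |p i - q i| = ∑ i, |p i - q i| := Finset.sum_filter_of_ne fun i _ h ↦
    (hw i).lt_of_ne fun h' ↦ h (by rw [hzero i h'.symm, sub_self, abs_zero])
  have hS : ∑ i ∈ s, |p i - q i| ^ 2 / (p i + 2 * q i) =
      ∑ i, (p i - q i) ^ 2 / (p i + 2 * q i) := by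
    rw [Finset.sum_filter_of_ne fun i _ h ↦ (hw i).lt_of_ne fun h' ↦ h (by rw [← h', div_zero])]
    simp only [sq_abs]
  have hW : ∑ i ∈ s, (p i + 2 * q i) = 3 := by
    rw [Finset.sum_filter_of_ne fun i _ h ↦ (hw i).lt_of_ne (Ne.symm h),
      Finset.sum_add_distrib, ← Finset.mul_sum, hp1, hq1]
    norm_num
  have hCS := Finset.sq_sum_div_le_sum_sq_div s (fun i ↦ |p i - q i|)
    (g := fun i ↦ p i + 2 * q i) fun i hi ↦ (Finset.mem_filter.1 hi).2
  rw [hd, hS, hW] at hCS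
  have hterm := Finset.sum_le_sum fun i (_ : i ∈ Finset.univ) ↦
    sub_add_three_halves_mul_sq_div_le (hp i) (hq i) (hpq i)
  rw [Finset.sum_add_distrib, Finset.sum_sub_distrib, hp1, hq1, ← Finset.mul_sum] at hterm
  linarith

lemma sum_negMulLog_mix_add_le {ι : Type*} [Fintype ι] {p q : ι → ℝ} (hp : ∀ i, 0 ≤ p i)
    (hq : ∀ i, 0 ≤ q i) (hp1 : ∑ i, p i = 1) (hq1 : ∑ i, q i = 1) {t : ℝ} (ht : t ∈ Set.Ioo 0 1) :
    (1 - t) * ∑ i, negMulLog (p i) + t * ∑ i, negMulLog (q i)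
        + t * (1 - t) * (∑ i, |p i - q i|) ^ 2 / 2 ≤
      ∑ i, negMulLog ((1 - t) * p i + t * q i) := by
  obtain ⟨ht0, ht1⟩ := ht
  set w : ι → ℝ := fun i ↦ (1 - t) * p i + t * q i
  have hpw : ∀ i, 0 ≤ (1 - t) * p i := fun i ↦ mul_nonneg (by linarith) (hp i)
  have hqw : ∀ i, 0 ≤ t * q i := fun i ↦ mul_nonneg ht0.le (hq i)
  have hw1 : ∑ i, w i = 1 := by
    simp only [w, Finset.sum_add_distrib, ← Finset.mul_sum, hp1, hq1]; ring
  have hKLp := pinsker hp (fun i ↦ add_nonneg (hpw i) (hqw i)) hp1 hw1 fun i h ↦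
    (mul_eq_zero.1 (by linarith [hpw i, hqw i] : (1 - t) * p i = 0)).resolve_left (by linarith)
  have hKLq := pinsker hq (fun i ↦ add_nonneg (hpw i) (hqw i)) hq1 hw1 fun i h ↦
    (mul_eq_zero.1 (by linarith [hpw i, hqw i] : t * q i = 0)).resolve_left ht0.ne'
  have hdp : ∑ i, |p i - w i| = t * ∑ i, |p i - q i| := by
    rw [Finset.mul_sum]
    refine Finset.sum_congr rfl fun i _ ↦ ?_
    rw [show p i - w i = t * (p i - q i) by ring, abs_mul, abs_of_pos ht0]
  have hdq : ∑ i, |q i - w i| = (1 - t) * ∑ i, |p i - q i| := by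
    rw [Finset.mul_sum]
    refine Finset.sum_congr rfl fun i _ ↦ ?_
    rw [show q i - w i = (1 - t) * (q i - p i) by ring, abs_mul, abs_of_pos (by linarith),
      abs_sub_comm]
  have hsplit : ∑ i, negMulLog (w i) =
      (1 - t) * ∑ i, negMulLog (p i) + t * ∑ i, negMulLog (q i)
        + (1 - t) * ∑ i, (p i * log (p i) - p i * log (w i))
        + t * ∑ i, (q i * log (q i) - q i * log (w i)) := by
    simp only [Finset.mul_sum, ← Finset.sum_add_distrib, negMulLog, w]
    exact Finset.sum_congr rfl fun i _ ↦ by ring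
  rw [hdp] at hKLp
  rw [hdq] at hKLq
  rw [hsplit]
  nlinarith [mul_le_mul_of_nonneg_left hKLp (by linarith : (0 : ℝ) ≤ 1 - t),
    mul_le_mul_of_nonneg_left hKLq ht0.le]

lemma negMulLog_add_le {x y : ℝ} (hx : 0 ≤ x) (hy : 0 ≤ y) :
    negMulLog (x + y) ≤ negMulLog x + negMulLog y := by
  rcases hx.eq_or_lt with rfl | hx
  · simp
  rcases hy.eq_or_lt with rfl | hy
  · simp
  have h1 := log_le_log hx (by linarith : x ≤ x + y)
  have h2 := log_le_log hy (by linarith : y ≤ x + y)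
  simp only [negMulLog, neg_mul]
  nlinarith [mul_le_mul_of_nonneg_left h1 hx.le, mul_le_mul_of_nonneg_left h2 hy.le]

lemma negMulLog_sum_le {ι : Type*} (s : Finset ι) {a : ι → ℝ} (ha : ∀ i ∈ s, 0 ≤ a i) :
    negMulLog (∑ i ∈ s, a i) ≤ ∑ i ∈ s, negMulLog (a i) :=
  Finset.le_sum_of_subadditive_on_pred negMulLog (0 ≤ ·) (by simp)
    (fun _ _ ↦ negMulLog_add_le) (fun _ _ ↦ add_nonneg) a ha

lemma sum_negMulLog_le_mul_log_card_add {ι : Type*} (s : Finset ι) {a : ι → ℝ}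
    (ha : ∀ i ∈ s, 0 ≤ a i) :
    ∑ i ∈ s, negMulLog (a i) ≤ (∑ i ∈ s, a i) * log s.card + negMulLog (∑ i ∈ s, a i) := by
  have h := sum_mul_log_div_le s ha (fun _ _ ↦ zero_le_one) fun _ _ h ↦ absurd h one_ne_zero
  simp only [log_one, mul_zero, sub_zero, Finset.sum_const, nsmul_eq_mul, mul_one] at h
  have hsplit : (∑ i ∈ s, a i) * log ((∑ i ∈ s, a i) / s.card) =
      (∑ i ∈ s, a i) * log (∑ i ∈ s, a i) - (∑ i ∈ s, a i) * log s.card := by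
    rcases (Finset.sum_nonneg ha).eq_or_lt with hA | hA
    · simp [← hA]
    have hs : (s.card : ℝ) ≠ 0 := by
      exact_mod_cast (Finset.card_pos.2 (Finset.nonempty_of_sum_ne_zero hA.ne')).ne'
    rw [log_div hA.ne' hs, mul_sub]
  simp only [negMulLog, neg_mul, Finset.sum_neg_distrib]
  linarith

lemma sum_negMulLog_add_sum_negMulLog_le {ι : Type*} [Fintype ι] {u b : ι → ℝ}
    (hu : ∀ i, 0 ≤ u i) (hb : ∀ i, 0 ≤ b i) (h1 : ∑ i, (u i + b i) = 1) :
    ∑ i, negMulLog (u i) + ∑ i, negMulLog (b i) ≤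
      ∑ i, negMulLog (u i + b i) + binEntropy (∑ i, b i) := by
  have hu' := sum_mul_log_div_le Finset.univ (a := u) (c := fun i ↦ u i + b i)
    (fun i _ ↦ hu i) (fun i _ ↦ add_nonneg (hu i) (hb i)) fun i _ h ↦ by linarith [hu i, hb i]
  have hb' := sum_mul_log_div_le Finset.univ (a := b) (c := fun i ↦ u i + b i)
    (fun i _ ↦ hb i) (fun i _ ↦ add_nonneg (hu i) (hb i)) fun i _ h ↦ by linarith [hu i, hb i]
  have hU : ∑ i, u i = 1 - ∑ i, b i := by rw [← h1, Finset.sum_add_distrib]; ring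
  rw [h1, div_one] at hu' hb'
  have hsplit : ∑ i, negMulLog (u i + b i) = ∑ i, negMulLog (u i) + ∑ i, negMulLog (b i)
      + ∑ i, (u i * log (u i) - u i * log (u i + b i))
      + ∑ i, (b i * log (b i) - b i * log (u i + b i)) := by
    simp only [← Finset.sum_add_distrib, negMulLog]
    exact Finset.sum_congr rfl fun i _ ↦ by ring
  rw [binEntropy_eq_negMulLog_add_negMulLog_one_sub, ← hU]
  simp only [negMulLog, neg_mul] at hsplit ⊢
  linarith

lemma sum_negMulLog_le_of_eq_zero {ι : Type*} [Fintype ι] [DecidableEq ι] {a : ι → ℝ}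
    (ha : ∀ i, 0 ≤ a i) {i₀ : ι} (ha₀ : a i₀ = 0) :
    ∑ i, negMulLog (a i) ≤ (∑ i, a i) * log (Fintype.card ι - 1) + negMulLog (∑ i, a i) := by
  rw [← Finset.sum_erase (f := fun i ↦ negMulLog (a i)) _
    (show negMulLog (a i₀) = 0 by rw [ha₀, negMulLog_zero])]
  have h := sum_negMulLog_le_mul_log_card_add (Finset.univ.erase i₀) fun i _ ↦ ha i
  rwa [Finset.sum_erase _ ha₀, Finset.card_erase_of_mem (Finset.mem_univ _), Finset.card_univ,
    Nat.cast_sub (Fintype.card_pos_iff.2 ⟨i₀⟩), Nat.cast_one] at h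

theorem sum_negMulLog_sub_le_qaryEntropy {ι : Type*} [Fintype ι] {p q : ι → ℝ}
    (hp : ∀ i, 0 ≤ p i) (hq : ∀ i, 0 ≤ q i) (hp1 : ∑ i, p i = 1) (hq1 : ∑ i, q i = 1) :
    ∑ i, negMulLog (p i) - ∑ i, negMulLog (q i) ≤
      qaryEntropy (Fintype.card ι) ((∑ i, |p i - q i|) / 2) := by
  classical
  -- `p = u + a` and `q = u + b` with `u = min p q` and `a, b` of disjoint supports
  set u : ι → ℝ := fun i ↦ min (p i) (q i)
  set a : ι → ℝ := fun i ↦ p i - u i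
  set b : ι → ℝ := fun i ↦ q i - u i
  have hu : ∀ i, 0 ≤ u i := fun i ↦ le_min (hp i) (hq i)
  have ha : ∀ i, 0 ≤ a i := fun i ↦ sub_nonneg.2 (min_le_left _ _)
  have hb : ∀ i, 0 ≤ b i := fun i ↦ sub_nonneg.2 (min_le_right _ _)
  have habs : ∀ i, |p i - q i| = a i + b i := fun i ↦ by
    rcases le_total (p i) (q i) with h | h
    · simp only [a, b, u, min_eq_left h, abs_of_nonpos (sub_nonpos.2 h)]; ring
    · simp only [a, b, u, min_eq_right h, abs_of_nonneg (sub_nonneg.2 h)]; ring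
  have hab : ∑ i, a i = ∑ i, b i := by
    simp only [a, b, Finset.sum_sub_distrib, hp1, hq1]
  set T := (∑ i, |p i - q i|) / 2
  have hT : ∑ i, b i = T := by simp only [T, habs, Finset.sum_add_distrib, hab]; ring
  obtain ⟨i₀, -, hi₀⟩ := Finset.exists_le_of_sum_le
    (Finset.nonempty_of_sum_ne_zero (hp1 ▸ one_ne_zero)) (hp1.trans hq1.symm).le
  have ha₀ : a i₀ = 0 := by simp only [a, u, min_eq_left hi₀, sub_self]
  have hsupp := sum_negMulLog_le_of_eq_zero ha ha₀
  rw [hab, hT] at hsupp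
  have hp_le : ∑ i, negMulLog (p i) ≤ ∑ i, negMulLog (u i) + ∑ i, negMulLog (a i) := by
    rw [← Finset.sum_add_distrib]
    exact Finset.sum_le_sum fun i _ ↦ by
      simpa only [a, add_sub_cancel] using negMulLog_add_le (hu i) (ha i)
  have huq : ∀ i, u i + b i = q i := fun i ↦ add_sub_cancel _ _
  have hq_ge := sum_negMulLog_add_sum_negMulLog_le hu hb (by simpa only [huq])
  simp only [huq] at hq_ge
  have hb_ge := negMulLog_sum_le Finset.univ fun i _ ↦ hb i
  rw [hT] at hq_ge hb_ge
  rw [qaryEntropy]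
  push_cast
  linarith

lemma negMulLog_one_sub_le_negMulLog {x : ℝ} (hx₀ : 0 ≤ x) (hx₁ : x ≤ 1 / 2) :
    negMulLog (1 - x) ≤ negMulLog x := by
  set W : ℝ → ℝ := fun y ↦ negMulLog y - negMulLog (1 - y)
  have hW : ∀ y ∈ Set.Ioo (0 : ℝ) (1 / 2),
      HasDerivAt W (-log y - log (1 - y) - 2) y := by
    intro y hy
    refine ((hasDerivAt_negMulLog hy.1.ne').sub
      ((hasDerivAt_negMulLog (by linarith [hy.2] : 1 - y ≠ 0)).comp y
        ((hasDerivAt_id y).const_sub 1))).congr_deriv ?_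
    ring
  have hW' : ∀ y ∈ Set.Ioo (0 : ℝ) (1 / 2),
      HasDerivAt (fun y ↦ -log y - log (1 - y) - 2) (-y⁻¹ + (1 - y)⁻¹) y := by
    intro y hy
    refine ((((hasDerivAt_log hy.1.ne').neg).sub
      ((hasDerivAt_log (by linarith [hy.2] : 1 - y ≠ 0)).comp y
        ((hasDerivAt_id y).const_sub 1))).sub_const 2).congr_deriv ?_
    ring
  have hconcave : ConcaveOn ℝ (Set.Icc 0 (1 / 2)) W := by
    refine concaveOn_of_hasDerivWithinAt2_nonpos (convex_Icc 0 (1 / 2))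
      (f' := fun y ↦ -log y - log (1 - y) - 2) (f'' := fun y ↦ -y⁻¹ + (1 - y)⁻¹)
      (by fun_prop) ?_ ?_ ?_ <;> simp only [interior_Icc]
    · exact fun y hy ↦ (hW y hy).hasDerivWithinAt
    · exact fun y hy ↦ (hW' y hy).hasDerivWithinAt
    · intro y hy
      have := inv_anti₀ hy.1 (by linarith [hy.2] : y ≤ 1 - y)
      linarith
  have h := hconcave.2 (Set.left_mem_Icc.2 (by norm_num)) (Set.right_mem_Icc.2 (by norm_num))
    (by linarith : 0 ≤ 1 - 2 * x) (by linarith : 0 ≤ 2 * x) (by ring)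
  have e : 2 * x * (1 / 2) = x := by ring
  norm_num [W, e] at h
  linarith

lemma binEntropy_half_le {ε : ℝ} (hε₀ : 0 < ε) (hε₁ : ε ≤ 1) :
    binEntropy (ε / 2) ≤ ε * log (2 / ε) := by
  have h := negMulLog_one_sub_le_negMulLog (by positivity : 0 ≤ ε / 2) (by linarith)
  have e : negMulLog (ε / 2) = ε / 2 * log (2 / ε) := by
    rw [negMulLog, log_div hε₀.ne' two_ne_zero, log_div two_ne_zero hε₀.ne']; ring
  rw [binEntropy_eq_negMulLog_add_negMulLog_one_sub]
  linarith

lemma qaryEntropy_half_le {N : ℕ} (hN : 2 ≤ N) {x ε : ℝ} (hx : 0 ≤ x) (hxε : x ≤ ε)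
    (hε₀ : 0 < ε) (hε₁ : ε ≤ 1) :
    qaryEntropy N (x / 2) ≤ ε * log (2 / ε) + ε / 2 * log (N - 1) := by
  have hhalf : ε / 2 ≤ 1 - 1 / (N : ℝ) := by
    have : 1 / (N : ℝ) ≤ 1 / 2 := one_div_le_one_div_of_le two_pos (by exact_mod_cast hN)
    linarith
  have hmono := (qaryEntropy_strictMonoOn hN).monotoneOn ⟨by positivity, by linarith⟩
    ⟨by positivity, hhalf⟩ (by linarith : x / 2 ≤ ε / 2)
  refine hmono.trans ?_
  rw [qaryEntropy]
  push_cast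
  linarith [binEntropy_half_le hε₀ hε₁]

lemma add_le_of_forall_mem_Ioo {a b c : ℝ} (h : ∀ t ∈ Set.Ioo (0 : ℝ) 1, a + (1 - t) * b ≤ c) :
    a + b ≤ c := by
  have hlim : Filter.Tendsto (fun t : ℝ ↦ a + (1 - t) * b) (nhdsWithin 0 (Set.Ioi 0))
      (nhds (a + (1 - 0) * b)) :=
    ((continuous_const.add ((continuous_const.sub continuous_id).mul continuous_const)).tendsto
      0).mono_left nhdsWithin_le_nhds
  simpa using le_of_tendsto hlim (Filter.mem_of_superset (Ioo_mem_nhdsGT one_pos) h)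

section Tensor

variable {m : ℕ} {n : Fin m → ℕ}

lemma two_le_card_idx (hm : 0 < m) (hn : ∀ k, 2 ≤ n k) : 2 ≤ Fintype.card (Idx n) := by
  simp only [Fintype.card_pi, Fintype.card_fin]
  exact (hn ⟨0, hm⟩).trans
    (Finset.single_le_prod' (fun k _ ↦ (hn k).trans' one_le_two) (Finset.mem_univ _))

lemma card_idx_eq_prod : (Fintype.card (Idx n) : ℝ) = ∏ k, (n k : ℝ) := by
  simp [Fintype.card_pi]

lemma entropy_eq_sum_negMulLog (X : Tensor n) : entropy X = ∑ I, negMulLog (X I) := by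
  simp [entropy, negMulLog, Finset.sum_neg_distrib]

lemma abs_le_supAbs {ι : Type*} [Finite ι] (X : ι → ℝ) (i : ι) : |X i| ≤ supAbs X :=
  le_ciSup (f := fun i ↦ |X i|) (Set.finite_range _).bddAbove i

lemma supAbs_nonneg {ι : Type*} (X : ι → ℝ) : 0 ≤ supAbs X :=
  Real.iSup_nonneg fun _ ↦ abs_nonneg _

lemma tinner_le_supAbs_mul_tnorm1 (X Y : Tensor n) : tinner X Y ≤ supAbs X * tnorm1 Y := by
  rw [tinner, tnorm1, Finset.mul_sum]
  refine Finset.sum_le_sum fun I _ ↦ ?_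
  calc X I * Y I ≤ |X I| * |Y I| := by rw [← abs_mul]; exact le_abs_self _
    _ ≤ supAbs X * |Y I| := by gcongr; exact abs_le_supAbs X I

lemma tinner_sub_left (X Y Z : Tensor n) :
    tinner (fun I ↦ X I - Y I) Z = tinner X Z - tinner Y Z := by
  simp only [tinner, sub_mul, Finset.sum_sub_distrib]

lemma tinner_sub_right (X Y Z : Tensor n) :
    tinner X (fun I ↦ Y I - Z I) = tinner X Y - tinner X Z := by
  simp only [tinner, mul_sub, Finset.sum_sub_distrib]

lemma tnorm1_sub_comm (X Y : Tensor n) :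
    tnorm1 (fun I ↦ X I - Y I) = tnorm1 (fun I ↦ Y I - X I) := by
  simp only [tnorm1, abs_sub_comm]

lemma Feasible.sum_eq_one {r : ∀ k : Fin m, Fin (n k) → ℝ} {P : Tensor n} (hP : Feasible r P)
    {k : Fin m} (hk : ∑ j, r k j = 1) : ∑ I, P I = 1 := by
  rw [← hk, ← Finset.sum_congr rfl fun j _ ↦ hP.2 k j]
  unfold marginal
  rw [Finset.sum_comm]
  simp

lemma Feasible.mix {r : ∀ k : Fin m, Fin (n k) → ℝ} {P Q : Tensor n} (hP : Feasible r P)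
    (hQ : Feasible r Q) {t : ℝ} (ht₀ : 0 ≤ t) (ht₁ : t ≤ 1) :
    Feasible r (fun I ↦ (1 - t) * P I + t * Q I) := by
  refine ⟨fun I ↦ by nlinarith [hP.1 I, hQ.1 I], fun k j ↦ ?_⟩
  have h : marginal (fun I ↦ (1 - t) * P I + t * Q I) k j
      = (1 - t) * marginal P k j + t * marginal Q k j := by
    simp only [marginal, Finset.mul_sum, ← Finset.sum_add_distrib]
    exact Finset.sum_congr rfl fun I _ ↦ by split_ifs <;> ring
  rw [h, hP.2, hQ.2]
  ring

lemma entCost_mix_le {C P Q : Tensor n} {η t : ℝ} (hη : 0 ≤ η) (hP : ∀ I, 0 ≤ P I)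
    (hQ : ∀ I, 0 ≤ Q I) (hP1 : ∑ I, P I = 1) (hQ1 : ∑ I, Q I = 1) (ht : t ∈ Set.Ioo 0 1) :
    entCost C η (fun I ↦ (1 - t) * P I + t * Q I) ≤
      (1 - t) * entCost C η P + t * entCost C η Q
        - η * (t * (1 - t) * tnorm1 (fun I ↦ P I - Q I) ^ 2 / 2) := by
  have hH := sum_negMulLog_mix_add_le hP hQ hP1 hQ1 ht
  have hlin : tinner C (fun I ↦ (1 - t) * P I + t * Q I) =
      (1 - t) * tinner C P + t * tinner C Q := by
    simp only [tinner, Finset.mul_sum, ← Finset.sum_add_distrib]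
    exact Finset.sum_congr rfl fun I _ ↦ by ring
  simp only [entCost, entropy_eq_sum_negMulLog, hlin, tnorm1]
  nlinarith [mul_le_mul_of_nonneg_left hH hη]

lemma entCost_add_le_of_minimizer {r : ∀ k : Fin m, Fin (n k) → ℝ} {k : Fin m}
    (hk : ∑ j, r k j = 1) {C P Q : Tensor n} {η : ℝ} (hη : 0 ≤ η) (hP : Feasible r P)
    (hPmin : ∀ R : Tensor n, Feasible r R → entCost C η P ≤ entCost C η R) (hQ : Feasible r Q) :
    entCost C η P + η * tnorm1 (fun I ↦ P I - Q I) ^ 2 / 2 ≤ entCost C η Q := by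
  refine add_le_of_forall_mem_Ioo fun t ht ↦ ?_
  have hmix := entCost_mix_le (C := C) hη hP.1 hQ.1 (hP.sum_eq_one hk) (hQ.sum_eq_one hk) ht
  have hmin := hPmin _ (hP.mix hQ ht.1.le ht.2.le)
  have h : t * (entCost C η P + (1 - t) * (η * tnorm1 (fun I ↦ P I - Q I) ^ 2 / 2)) ≤
      t * entCost C η Q := by linarith
  exact le_of_mul_le_mul_left h ht.1

lemma mul_tnorm1_sub_le_supAbs_sub {r : ∀ k : Fin m, Fin (n k) → ℝ} {k : Fin m}
    (hk : ∑ j, r k j = 1) {C Ct P Pt : Tensor n} {η : ℝ} (hη : 0 ≤ η) (hP : Feasible r P)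
    (hPmin : ∀ R : Tensor n, Feasible r R → entCost C η P ≤ entCost C η R) (hPt : Feasible r Pt)
    (hPtmin : ∀ R : Tensor n, Feasible r R → entCost Ct η Pt ≤ entCost Ct η R) :
    η * tnorm1 (fun I ↦ P I - Pt I) ≤ supAbs (fun I ↦ C I - Ct I) := by
  set d := tnorm1 (fun I ↦ P I - Pt I)
  have h₁ := entCost_add_le_of_minimizer hk hη hP hPmin hPt
  have h₂ := entCost_add_le_of_minimizer hk hη hPt hPtmin hP
  rw [← tnorm1_sub_comm] at h₂
  have hHolder := tinner_le_supAbs_mul_tnorm1 (fun I ↦ C I - Ct I) (fun I ↦ Pt I - P I)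
  rw [← tnorm1_sub_comm, tinner_sub_right, tinner_sub_left, tinner_sub_left] at hHolder
  have hsq : η * d * d ≤ supAbs (fun I ↦ C I - Ct I) * d := by
    simp only [entCost] at h₁ h₂
    nlinarith
  rcases (show 0 ≤ d from Finset.sum_nonneg fun _ _ ↦ abs_nonneg _).eq_or_lt with hd | hd
  · rw [← hd, mul_zero]; exact supAbs_nonneg _
  · exact le_of_mul_le_mul_right hsq hd

lemma entCost_sub_entCost (C P Q : Tensor n) (η : ℝ) :
    entCost C η Q - entCost C η P =
      tinner C (fun I ↦ Q I - P I) + η * (entropy P - entropy Q) := by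
  rw [entCost, entCost, tinner_sub_right]
  ring

lemma entropy_sub_le_qaryEntropy {P Q : Tensor n}
    (hP : ∀ I, 0 ≤ P I) (hQ : ∀ I, 0 ≤ Q I) (hP1 : ∑ I, P I = 1) (hQ1 : ∑ I, Q I = 1) :
    entropy P - entropy Q ≤
      qaryEntropy (Fintype.card (Idx n)) (tnorm1 (fun I ↦ P I - Q I) / 2) := by
  rw [entropy_eq_sum_negMulLog, entropy_eq_sum_negMulLog]
  exact sum_negMulLog_sub_le_qaryEntropy hP hQ hP1 hQ1

end Tensor

theorem perturbed_cost_minimizer_bound_general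
    {m : ℕ} (hm : 2 ≤ m) {n : Fin m → ℕ} (hn : ∀ k, 2 ≤ n k)
    (η : ℝ) (hη : 0 < η)
    (r : ∀ k : Fin m, Fin (n k) → ℝ) (hr : ∀ k, IsSimplex (r k))
    (C Ct : Tensor n)
    (εlog : ℝ) (hεlog0 : 0 < εlog) (hεlog1 : εlog ≤ 1)
    (hdiff : supAbs (fun I : Idx n => C I - Ct I) ≤ η * εlog)
    (P : Tensor n) (hPF : Feasible r P)
    (hPMin : ∀ Q : Tensor n, Feasible r Q → entCost C η P ≤ entCost C η Q)
    (Pt : Tensor n) (hPtF : Feasible r Pt)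
    (hPtMin : ∀ Q : Tensor n, Feasible r Q → entCost Ct η Pt ≤ entCost Ct η Q) :
    tnorm1 (fun I => P I - Pt I) ≤ εlog ∧
    |entCost C η P - entCost C η Pt| ≤
      εlog * supAbs C
        + η * (εlog * Real.log (2 / εlog)
          + εlog / 2 * Real.log ((∏ k, (n k : ℝ)) - 1)) := by
  have hm₀ : 0 < m := by omega
  have hk := (hr ⟨0, hm₀⟩).2
  have hd : tnorm1 (fun I => P I - Pt I) ≤ εlog := le_of_mul_le_mul_left
    ((mul_tnorm1_sub_le_supAbs_sub hk hη.le hPF hPMin hPtF hPtMin).trans hdiff) hη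
  refine ⟨hd, ?_⟩
  have hgap := sub_nonneg.2 (hPMin Pt hPtF)
  rw [abs_sub_comm, abs_of_nonneg hgap, entCost_sub_entCost]
  have hcost : tinner C (fun I ↦ Pt I - P I) ≤ εlog * supAbs C := by
    refine (tinner_le_supAbs_mul_tnorm1 C _).trans ?_
    rw [← tnorm1_sub_comm, mul_comm]
    exact mul_le_mul_of_nonneg_right hd (supAbs_nonneg C)
  have hent := (entropy_sub_le_qaryEntropy hPF.1 hPtF.1
    (hPF.sum_eq_one hk) (hPtF.sum_eq_one hk)).trans
    (qaryEntropy_half_le (two_le_card_idx hm₀ hn) (Finset.sum_nonneg fun _ _ ↦ abs_nonneg _)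
      hd hεlog0 hεlog1)
  rw [card_idx_eq_prod] at hent
  linarith [mul_le_mul_of_nonneg_left hent hη.le]

/-- bound for term `(eq:Term1)` in the proof of Theorem `thm:LowRankError`:
if `‖C − C̃‖_∞ ≤ η ε_log`, then the minimizers `P` and `P̃` of `V_C^η` and `V_{C̃}^η` over
`B(r_1,…,r_m)` satisfy `‖P − P̃‖₁ ≤ ε_log` and
`|V_C^η(P) − V_C^η(P̃)| ≤ ε_log ‖C‖_∞ + η (ε_log log(2/ε_log) + (ε_log/2) log(∏ n_k − 1))`. -/
theorem perturbed_cost_minimizer_bound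
    {m : ℕ} (hm : 2 ≤ m) {n : Fin m → ℕ} (hn : ∀ k, 2 ≤ n k)
    (η : ℝ) (hη : 0 < η)
    (r : ∀ k : Fin m, Fin (n k) → ℝ) (hr : ∀ k, IsSimplex (r k))
    (C Ct : Tensor n) (hC : ∀ I, 0 ≤ C I)
    (εlog : ℝ) (hεlog0 : 0 < εlog) (hεlog1 : εlog ≤ 1)
    (hdiff : supAbs (fun I : Idx n => C I - Ct I) ≤ η * εlog)
    (P : Tensor n) (hPF : Feasible r P)
    (hPMin : ∀ Q : Tensor n, Feasible r Q → entCost C η P ≤ entCost C η Q)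
    (Pt : Tensor n) (hPtF : Feasible r Pt)
    (hPtMin : ∀ Q : Tensor n, Feasible r Q → entCost Ct η Pt ≤ entCost Ct η Q) :
    tnorm1 (fun I => P I - Pt I) ≤ εlog ∧
    |entCost C η P - entCost C η Pt| ≤
      εlog * supAbs C
        + η * (εlog * Real.log (2 / εlog)
          + εlog / 2 * Real.log ((∏ k, (n k : ℝ)) - 1)) :=
  perturbed_cost_minimizer_bound_general hm hn η hη r hr C Ct εlog hεlog0 hεlog1 hdiff P hPF hPMin
    Pt hPtF hPtMin

end MOT
end
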